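/- For n-point Gauss–Legendre quadrature on [−1,1] with nodes x₁ < ... < x_n the roots of the Legendre polynomial P_n and weights ω_j = ∫_{−1}^{1} ℓ_j(x) dx (where ℓ_j are the Lagrange basis polynomials at the nodes), the quadrature Σ_j ω_j q(x_j) equals ∫_{−1}^{1} q(x) dx for every polynomial q of degree at most 2n − 1. -/

import Mathlib

open Real

/-- n-point Gauss–Legendre quadrature: if x₁ < ... < x_n are the roots of a degree-n
polynomial P that is L²([−1,1])-orthogonal to all polynomials of degree < n (the
Legendre polynomial), and the weights are ω_j = ∫_{−1}^{1} ℓ_j with ℓ_j the Lagrange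
basis polynomials at the nodes, then the quadrature is exact on polynomials of degree
at most 2n − 1. -/
theorem gauss_legendre_exactness (n : ℕ) (hn : 0 < n)
    (P : Polynomial ℝ) (hP : P.natDegree = n)
    (horth : ∀ r : Polynomial ℝ, r.natDegree < n →
      ∫ t in (-1:ℝ)..1, P.eval t * r.eval t = 0)
    (x : Fin n → ℝ) (hx : StrictMono x)
    (hroots : ∀ j, P.eval (x j) = 0)
    (ω : Fin n → ℝ)
    (hω : ∀ j, ω j = ∫ t in (-1:ℝ)..1, (Lagrange.basis Finset.univ x j).eval t)
    (q : Polynomial ℝ) (hq : q.natDegree ≤ 2 * n - 1) :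
    ∑ j, ω j * q.eval (x j) = ∫ t in (-1:ℝ)..1, q.eval t := by
  classical
  have hPne : P ≠ 0 := by
    intro h; rw [h, Polynomial.natDegree_zero] at hP; omega
  set c : ℝ := P.leadingCoeff with hc
  have hcne : c ≠ 0 := Polynomial.leadingCoeff_ne_zero.mpr hPne
  set Pm : Polynomial ℝ := Polynomial.C c⁻¹ * P with hPm
  have hmonic : Pm.Monic := by
    rw [hPm]
    exact Polynomial.monic_C_mul_of_mul_leadingCoeff_eq_one (by field_simp; exact hc.symm)
  have hPmdeg : Pm.natDegree = n := by
    rw [hPm, Polynomial.natDegree_C_mul (inv_ne_zero hcne), hP]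
  set s : Polynomial ℝ := q /ₘ Pm with hs
  set r : Polynomial ℝ := q %ₘ Pm with hr
  have hdecomp : q = Pm * s + r := by
    have := Polynomial.modByMonic_add_div q Pm
    rw [← hs, ← hr] at this; linear_combination -this
  have hrdeg : r.natDegree < n := by
    have := Polynomial.natDegree_modByMonic_lt q hmonic (by
      intro h; rw [h, Polynomial.natDegree_one] at hPmdeg; omega)
    rw [hPmdeg] at this
    exact this
  have hsdeg : s.natDegree < n := by
    by_cases hs0 : s = 0
    · rw [hs0, Polynomial.natDegree_zero]; omega
    have hPms : Pm * s ≠ 0 := mul_ne_zero hmonic.ne_zero hs0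
    have h1 : (Pm * s).natDegree = n + s.natDegree := by
      rw [Polynomial.natDegree_mul hmonic.ne_zero hs0, hPmdeg]
    have h2 : (Pm * s).natDegree ≤ max q.natDegree r.natDegree := by
      have : Pm * s = q - r := by rw [hdecomp]; ring
      rw [this]
      exact (Polynomial.natDegree_sub_le _ _)
    have : n + s.natDegree ≤ 2 * n - 1 := by
      rw [← h1]
      exact h2.trans (max_le hq (by omega))
    omega
  -- roots of Pm
  have hPmroots : ∀ j, Pm.eval (x j) = 0 := by
    intro j; rw [hPm]; simp [hroots j]
  -- quadrature of q equals quadrature of r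
  have hquad : ∑ j, ω j * q.eval (x j) = ∑ j, ω j * r.eval (x j) := by
    apply Finset.sum_congr rfl
    intro j _
    rw [hdecomp]
    simp [hPmroots j]
  -- integral of q equals integral of r
  have hintPm : (∫ t in (-1:ℝ)..1, Pm.eval t * s.eval t) = 0 := by
    have : (∫ t in (-1:ℝ)..1, Pm.eval t * s.eval t)
        = c⁻¹ * ∫ t in (-1:ℝ)..1, P.eval t * s.eval t := by
      rw [← intervalIntegral.integral_const_mul]
      congr 1; ext t; rw [hPm]; simp; ring
    rw [this, horth s hsdeg, mul_zero]
  have hint : (∫ t in (-1:ℝ)..1, q.eval t) = ∫ t in (-1:ℝ)..1, r.eval t := by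
    have hcont : ∀ p : Polynomial ℝ, IntervalIntegrable (fun t => p.eval t)
        MeasureTheory.volume (-1:ℝ) 1 := fun p =>
      (p.continuous_aeval).intervalIntegrable _ _
    calc (∫ t in (-1:ℝ)..1, q.eval t)
        = ∫ t in (-1:ℝ)..1, (Pm.eval t * s.eval t + r.eval t) := by
          congr 1; ext t; rw [hdecomp]; simp
      _ = (∫ t in (-1:ℝ)..1, Pm.eval t * s.eval t) + ∫ t in (-1:ℝ)..1, r.eval t := by
          rw [intervalIntegral.integral_add]
          · have := hcont (Pm * s); simpa using this
          · exact hcont r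
      _ = ∫ t in (-1:ℝ)..1, r.eval t := by rw [hintPm, zero_add]
  rw [hquad, hint]
  -- exactness on degree < n via Lagrange interpolation
  have hinj : Set.InjOn x (Finset.univ : Finset (Fin n)) := hx.injective.injOn
  have hrdeglt : r.degree < (Finset.univ : Finset (Fin n)).card := by
    rw [Finset.card_univ, Fintype.card_fin]
    exact lt_of_le_of_lt (Polynomial.degree_le_natDegree)
      (by exact_mod_cast hrdeg)
  have hrep : r = ∑ j, Polynomial.C (r.eval (x j)) * Lagrange.basis Finset.univ x j := by
    have h := (Lagrange.eq_interpolate hinj hrdeglt).symm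
    rw [Lagrange.interpolate_apply] at h
    exact h.symm
  calc ∑ j, ω j * r.eval (x j)
      = ∑ j, ∫ t in (-1:ℝ)..1,
          (Polynomial.C (r.eval (x j)) * Lagrange.basis Finset.univ x j).eval t := by
        apply Finset.sum_congr rfl; intro j _
        rw [hω j, ← intervalIntegral.integral_mul_const]
        congr 1; ext t; simp; ring
    _ = ∫ t in (-1:ℝ)..1,
          (∑ j, Polynomial.C (r.eval (x j)) * Lagrange.basis Finset.univ x j).eval t := by
        rw [← intervalIntegral.integral_finset_sum]
        · congr 1; ext t; rw [Polynomial.eval_finset_sum]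
        · intro j _
          exact ((Polynomial.C (r.eval (x j)) *
            Lagrange.basis Finset.univ x j).continuous_aeval).intervalIntegrable _ _
    _ = ∫ t in (-1:ℝ)..1, r.eval t := by rw [← hrep]
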